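/- Let ν ≥ 2, let B be a Hermitian ν×ν complex matrix, and let E denote the ν×ν matrix whose (ν,ν) entry is 1 and all other entries are 0. Then for all real numbers s, s′ and every n ∈ {1,…,ν−1}: λ_n(B + s·E) ≤ λ_{n+1}(B + s′·E). In particular, if a Hermitian matrix family H(ϑ) differs from a fixed Hermitian matrix only in one diagonal entry, then the intervals [inf_ϑ λ_n(H(ϑ)), sup_ϑ λ_n(H(ϑ))] may touch but do not overlap. -/

import Mathlib

open Matrix

/-- The eigenvalues of a Hermitian matrix, listed in increasing order
(counted with multiplicity). -/
noncomputable def eigs {ν : ℕ} {A : Matrix (Fin ν) (Fin ν) ℂ} (hA : A.IsHermitian) :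
    Fin ν → ℝ :=
  hA.eigenvalues ∘ ⇑(Tuple.sort hA.eigenvalues)

lemma herm_add_diag {ν : ℕ} {H₀ : Matrix (Fin ν) (Fin ν) ℂ} (hH₀ : H₀.IsHermitian)
    (v : Fin ν → ℝ) : (H₀ + Matrix.diagonal fun n => (v n : ℂ)).IsHermitian :=
  hH₀.add (Matrix.isHermitian_diagonal_of_self_adjoint _
    (by funext n; exact Complex.conj_ofReal (v n)))

section Aux

open Module Finset

variable {ν : ℕ}
local notation "𝔼" => EuclideanSpace ℂ (Fin ν)

private lemma inner_map_eq_sum (b : OrthonormalBasis (Fin ν) ℂ 𝔼) (T : 𝔼 →ₗ[ℂ] 𝔼) (μ : Fin ν → ℝ)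
    (hT : ∀ i, T (b i) = (μ i : ℂ) • b i) (x : 𝔼) :
    inner ℂ x (T x) = ∑ i, ((μ i * ‖(inner ℂ (b i) x : ℂ)‖ ^ 2 : ℝ) : ℂ) := by
  have hTx : T x = ∑ i, (inner ℂ (b i) x : ℂ) • ((μ i : ℂ) • b i) := by
    conv_lhs => rw [← b.sum_repr' x]
    rw [map_sum]
    refine Finset.sum_congr rfl fun i _ => ?_
    rw [_root_.map_smul, hT]
  rw [hTx, inner_sum]
  refine Finset.sum_congr rfl fun i _ => ?_
  rw [inner_smul_right, inner_smul_right]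
  have hconj : (inner ℂ x (b i) : ℂ) = (starRingEnd ℂ) (inner ℂ (b i) x) :=
    (inner_conj_symm x (b i)).symm
  rw [hconj]
  set a := (inner ℂ (b i) x : ℂ)
  have h3 : a * ((μ i : ℂ) * (starRingEnd ℂ) a) = (μ i : ℂ) * (a * (starRingEnd ℂ) a) := by ring
  rw [h3, RCLike.mul_conj]
  norm_cast
  simp [Complex.ofReal_mul]

private lemma norm_sq_eq_sum' (b : OrthonormalBasis (Fin ν) ℂ 𝔼) (x : 𝔼) :
    (‖x‖ ^ 2 : ℝ) = ∑ i, ‖(inner ℂ (b i) x : ℂ)‖ ^ 2 := by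
  have h : (inner ℂ x x : ℂ) = ∑ i, ((1 * ‖(inner ℂ (b i) x : ℂ)‖ ^ 2 : ℝ) : ℂ) :=
    inner_map_eq_sum b (LinearMap.id) (fun _ => 1) (by simp) x
  have h2 : (inner ℂ x x : ℂ) = ((‖x‖ ^ 2 : ℝ) : ℂ) := by
    exact_mod_cast inner_self_eq_norm_sq_to_K x
  rw [h2] at h
  have h4 := congrArg Complex.re h
  simp only [Complex.ofReal_re, Complex.re_sum, one_mul] at h4
  exact h4

private lemma inner_eq_zero_of_span (b : OrthonormalBasis (Fin ν) ℂ 𝔼) (F : Finset (Fin ν))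
    {x : 𝔼} (hx : x ∈ Submodule.span ℂ (⇑b '' ↑F)) {i : Fin ν} (hi : i ∉ F) :
    (inner ℂ (b i) x : ℂ) = 0 := by
  have hle : Submodule.span ℂ (⇑b '' ↑F) ≤ LinearMap.ker ((innerₛₗ ℂ) (b i)) := by
    rw [Submodule.span_le]
    rintro _ ⟨j, hj, rfl⟩
    have hij : i ≠ j := fun h => hi (h ▸ hj)
    simpa [LinearMap.mem_ker] using b.orthonormal.2 hij
  exact hle hx

private lemma rayleigh_le (b : OrthonormalBasis (Fin ν) ℂ 𝔼) (T : 𝔼 →ₗ[ℂ] 𝔼) (μ : Fin ν → ℝ)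
    (hT : ∀ i, T (b i) = (μ i : ℂ) • b i) (F : Finset (Fin ν)) (C : ℝ)
    (hC : ∀ i ∈ F, μ i ≤ C) {x : 𝔼} (hx : x ∈ Submodule.span ℂ (⇑b '' ↑F)) :
    (inner ℂ x (T x) : ℂ).re ≤ C * ‖x‖ ^ 2 := by
  rw [inner_map_eq_sum b T μ hT x, norm_sq_eq_sum' b x, Complex.re_sum, Finset.mul_sum]
  refine Finset.sum_le_sum fun i _ => ?_
  rw [Complex.ofReal_re]
  by_cases hi : i ∈ F
  · exact mul_le_mul_of_nonneg_right (hC i hi) (sq_nonneg _)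
  · rw [inner_eq_zero_of_span b F hx hi]; simp

private lemma rayleigh_ge (b : OrthonormalBasis (Fin ν) ℂ 𝔼) (T : 𝔼 →ₗ[ℂ] 𝔼) (μ : Fin ν → ℝ)
    (hT : ∀ i, T (b i) = (μ i : ℂ) • b i) (F : Finset (Fin ν)) (C : ℝ)
    (hC : ∀ i ∈ F, C ≤ μ i) {x : 𝔼} (hx : x ∈ Submodule.span ℂ (⇑b '' ↑F)) :
    C * ‖x‖ ^ 2 ≤ (inner ℂ x (T x) : ℂ).re := by
  rw [inner_map_eq_sum b T μ hT x, norm_sq_eq_sum' b x, Complex.re_sum, Finset.mul_sum]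
  refine Finset.sum_le_sum fun i _ => ?_
  rw [Complex.ofReal_re]
  by_cases hi : i ∈ F
  · exact mul_le_mul_of_nonneg_right (hC i hi) (sq_nonneg _)
  · rw [inner_eq_zero_of_span b F hx hi]; simp

private lemma finrank_inf_ge (U V : Submodule ℂ 𝔼) :
    finrank ℂ U + finrank ℂ V ≤ ν + finrank ℂ ↥(U ⊓ V) := by
  have h1 := Submodule.finrank_sup_add_finrank_inf_eq U V
  have h2 : finrank ℂ ↥(U ⊔ V) ≤ ν := by
    have := Submodule.finrank_le (U ⊔ V)
    rwa [finrank_euclideanSpace_fin] at this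
  omega

private lemma exists_ne_zero_mem (W : Submodule ℂ 𝔼) (h : 0 < finrank ℂ W) :
    ∃ x : 𝔼, x ≠ 0 ∧ x ∈ W := by
  have : Nontrivial W := finrank_pos_iff.mp h
  obtain ⟨y, hy⟩ := exists_ne (0 : W)
  exact ⟨↑y, by simpa [Submodule.coe_eq_zero] using hy, y.2⟩

private lemma finrank_span_basis (b : OrthonormalBasis (Fin ν) ℂ 𝔼) (F : Finset (Fin ν)) :
    finrank ℂ ↥(Submodule.span ℂ (⇑b '' ↑F)) = F.card := by
  have hli : LinearIndependent ℂ (fun i : F => b i) :=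
    (b.orthonormal.comp (Subtype.val : F → Fin ν) Subtype.val_injective).linearIndependent
  have himg : ⇑b '' ↑F = Set.range (fun i : F => b i) := Set.image_eq_range _ _
  rw [himg, finrank_span_eq_card hli, Fintype.card_coe]

/-- The sorted orthonormal eigenbasis of a Hermitian matrix. -/
private noncomputable def sortedBasis {A : Matrix (Fin ν) (Fin ν) ℂ} (hA : A.IsHermitian) :
    OrthonormalBasis (Fin ν) ℂ 𝔼 :=
  hA.eigenvectorBasis.reindex (Tuple.sort hA.eigenvalues)⁻¹

private lemma sortedBasis_apply {A : Matrix (Fin ν) (Fin ν) ℂ} (hA : A.IsHermitian) (j : Fin ν) :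
    sortedBasis hA j = hA.eigenvectorBasis (Tuple.sort hA.eigenvalues j) := by
  simp [sortedBasis, OrthonormalBasis.coe_reindex, Equiv.Perm.inv_def]

private lemma monotone_eigs {A : Matrix (Fin ν) (Fin ν) ℂ} (hA : A.IsHermitian) :
    Monotone (eigs hA) :=
  Tuple.monotone_sort hA.eigenvalues

private lemma toEuclideanLin_sortedBasis {A : Matrix (Fin ν) (Fin ν) ℂ} (hA : A.IsHermitian)
    (j : Fin ν) :
    Matrix.toEuclideanLin A (sortedBasis hA j) = ((eigs hA j : ℝ) : ℂ) • sortedBasis hA j := by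
  rw [sortedBasis_apply]
  set i := Tuple.sort hA.eigenvalues j
  have h := hA.mulVec_eigenvectorBasis i
  have hrfl : Matrix.toEuclideanLin A (hA.eigenvectorBasis i) =
      (WithLp.equiv 2 (Fin ν → ℂ)).symm
        (A *ᵥ (WithLp.equiv 2 (Fin ν → ℂ)) (hA.eigenvectorBasis i)) := rfl
  rw [hrfl]; erw [h]
  have heig : eigs hA j = hA.eigenvalues i := rfl
  rw [heig]
  apply (WithLp.equiv 2 (Fin ν → ℂ)).injective
  simp only [Equiv.apply_symm_apply, WithLp.equiv_apply, WithLp.ofLp_smul]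
  funext l
  simp [Complex.real_smul]

private noncomputable def coordMap (k : Fin ν) : 𝔼 →ₗ[ℂ] ℂ :=
  (LinearMap.proj k).comp (WithLp.linearEquiv 2 ℂ (Fin ν → ℂ)).toLinearMap

private lemma coordMap_apply (k : Fin ν) (x : 𝔼) :
    coordMap k x = (WithLp.equiv 2 (Fin ν → ℂ)) x k := rfl

private lemma finrank_ker_coordMap (k : Fin ν) :
    finrank ℂ ↥(LinearMap.ker (coordMap k)) = ν - 1 := by
  have hsurj : Function.Surjective (coordMap k) := fun z =>
    ⟨(WithLp.equiv 2 (Fin ν → ℂ)).symm (Pi.single k z), by simp [coordMap_apply]⟩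
  have hr := LinearMap.finrank_range_add_finrank_ker (coordMap k)
  rw [LinearMap.range_eq_top.mpr hsurj, finrank_top, finrank_euclideanSpace_fin] at hr
  have : finrank ℂ ℂ = 1 := Module.finrank_self ℂ
  omega

/-- Key interlacing lemma: if two Hermitian matrices agree (as operators) on the hyperplane
`{y | y k = 0}`, then their sorted eigenvalues interlace. -/
private lemma key_interlace {A A' : Matrix (Fin ν) (Fin ν) ℂ}
    (hA : A.IsHermitian) (hA' : A'.IsHermitian) (k : Fin ν)
    (hAA' : ∀ y : Fin ν → ℂ, y k = 0 → A *ᵥ y = A' *ᵥ y)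
    (n m : Fin ν) (hnm : (m : ℕ) = (n : ℕ) + 1) :
    eigs hA n ≤ eigs hA' m := by
  classical
  set c := sortedBasis hA with hc
  set c' := sortedBasis hA' with hc'
  set U := Submodule.span ℂ (⇑c '' ↑(Finset.Ici n)) with hUdef
  set V := Submodule.span ℂ (⇑c' '' ↑(Finset.Iic m)) with hVdef
  set S := LinearMap.ker (coordMap k) with hSdef
  have hU : finrank ℂ U = ν - (n : ℕ) := by rw [hUdef, finrank_span_basis, Fin.card_Ici]
  have hV : finrank ℂ V = (m : ℕ) + 1 := by rw [hVdef, finrank_span_basis, Fin.card_Iic]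
  have hS : finrank ℂ S = ν - 1 := finrank_ker_coordMap k
  have h1 := finrank_inf_ge U S
  have h2 := finrank_inf_ge (U ⊓ S) V
  have hmlt : (m : ℕ) < ν := m.2
  have hnlt : (n : ℕ) < ν := n.2
  have hpos : 0 < finrank ℂ ↥((U ⊓ S) ⊓ V) := by omega
  obtain ⟨x, hx0, hxm⟩ := exists_ne_zero_mem _ hpos
  rw [Submodule.mem_inf, Submodule.mem_inf] at hxm
  obtain ⟨⟨hxU, hxS⟩, hxV⟩ := hxm
  have hxk : (WithLp.equiv 2 (Fin ν → ℂ)) x k = 0 := by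
    have := LinearMap.mem_ker.mp hxS
    rwa [coordMap_apply] at this
  have hTT : Matrix.toEuclideanLin A x = Matrix.toEuclideanLin A' x := by
    have heq := hAA' ((WithLp.equiv 2 (Fin ν → ℂ)) x) hxk
    rw [Matrix.toEuclideanLin_apply, Matrix.toEuclideanLin_apply]; exact congrArg (WithLp.toLp 2) heq
  have hge : eigs hA n * ‖x‖ ^ 2 ≤ (inner ℂ x (Matrix.toEuclideanLin A x) : ℂ).re :=
    rayleigh_ge c _ (eigs hA) (toEuclideanLin_sortedBasis hA) (Finset.Ici n) _
      (fun i hi => monotone_eigs hA (Finset.mem_Ici.mp hi)) hxU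
  have hle : (inner ℂ x (Matrix.toEuclideanLin A' x) : ℂ).re ≤ eigs hA' m * ‖x‖ ^ 2 :=
    rayleigh_le c' _ (eigs hA') (toEuclideanLin_sortedBasis hA') (Finset.Iic m) _
      (fun i hi => monotone_eigs hA' (Finset.mem_Iic.mp hi)) hxV
  have hxnorm : 0 < ‖x‖ ^ 2 := pow_pos (norm_pos_iff.mpr hx0) 2
  have hmain : eigs hA n * ‖x‖ ^ 2 ≤ eigs hA' m * ‖x‖ ^ 2 := by
    calc eigs hA n * ‖x‖ ^ 2 ≤ (inner ℂ x (Matrix.toEuclideanLin A x) : ℂ).re := hge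
    _ = (inner ℂ x (Matrix.toEuclideanLin A' x) : ℂ).re := by rw [hTT]
    _ ≤ eigs hA' m * ‖x‖ ^ 2 := hle
  exact le_of_mul_le_mul_right hmain hxnorm

end Aux

/-- for a Hermitian `B` and `E` the matrix with a single `1` in the last
diagonal entry, the perturbed eigenvalues interlace:
`λₙ(B + s·E) ≤ λₙ₊₁(B + s′·E)` for all real `s, s′`. -/
theorem bands_do_not_overlap (ν : ℕ) (hν : 2 ≤ ν)
    (B : Matrix (Fin ν) (Fin ν) ℂ) (hB : B.IsHermitian) (s s' : ℝ)
    (n : Fin ν) (hn : (n : ℕ) + 1 < ν) :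
    eigs (herm_add_diag hB
        (fun j => if j = (⟨ν - 1, by omega⟩ : Fin ν) then s else 0)) n ≤
      eigs (herm_add_diag hB
        (fun j => if j = (⟨ν - 1, by omega⟩ : Fin ν) then s' else 0)) ⟨(n : ℕ) + 1, hn⟩ := by
  refine key_interlace _ _ (⟨ν - 1, by omega⟩ : Fin ν) ?_ n ⟨(n : ℕ) + 1, hn⟩ rfl
  intro y hy
  funext j
  simp only [Matrix.add_mulVec, Pi.add_apply, Matrix.mulVec_diagonal]
  by_cases hj : j = (⟨ν - 1, by omega⟩ : Fin ν)
  · subst hj; rw [hy]; simp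
  · simp [hj]
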